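/- arXiv:1608.01040 — 2 statements merged into one kernel-verified Lean document; each statement's English description precedes it below -/
import Mathlib

section
/- Let W_L = e_0 e_1 ... e_{k-1} e_0 be a cycle in the intersection graph of a hypergraph H = (V,E) such that every vertex of H has degree at most 2. Then there exist vertices v_0, v_1, ..., v_{k-1} ∈ V such that v_0 e_0 v_1 e_1 ... v_{k-1} e_{k-1} v_0 is a closed strict trail in H (i.e., v_i ∈ e_{i-1} ∩ e_i for all i modulo k, and v_{i-1} ≠ v_i for all i). -/
/-!
Pick `wᵢ ∈ eᵢ ∩ eᵢ₊₁` and set `vᵢ := wᵢ₋₁`, so that `vᵢ, vᵢ₊₁ ∈ eᵢ`. If `vᵢ = vᵢ₊₁`, that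
vertex lies in the three edges `eᵢ₋₁, eᵢ, eᵢ₊₁`, which are distinct because `k ≥ 3`; this
contradicts the degree bound.
-/

open Finset

/-- The cyclically-next index in `Fin n`. -/
def nxt {n : ℕ} (i : Fin n) : Fin n := ⟨(i.1 + 1) % n, Nat.mod_lt _ i.pos⟩

/-- A closed strict trail `v₀ e₀ v₁ e₁ … v_{n-1} e_{n-1} v₀` in the hypergraph whose
edges are given by the family `E` (indexed by `ι`, so parallel edges are allowed):
a closed walk of length `n ≥ 2` with consecutive anchor vertices distinct,
each `vᵢ, v_{i+1} ∈ eᵢ`, and pairwise distinct edges. -/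
structure CST {V ι : Type} (E : ι → Finset V) where
  n : ℕ
  hn : 2 ≤ n
  vert : Fin n → V
  edge : Fin n → ι
  mem_left : ∀ i, vert i ∈ E (edge i)
  mem_right : ∀ i, vert (nxt i) ∈ E (edge i)
  ne_next : ∀ i, vert i ≠ vert (nxt i)
  edge_inj : Function.Injective edge

/-- An Euler family: a finite family of pairwise anchor-disjoint closed strict trails
such that every edge of the hypergraph lies in exactly one trail. -/
def HasEulerFamily {V ι : Type} (E : ι → Finset V) : Prop :=
  ∃ (m : ℕ) (T : Fin m → CST E),
    (∀ e : ι, ∃ k i, (T k).edge i = e) ∧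
    (∀ k k' i i', (T k).edge i = (T k').edge i' → k = k') ∧
    (∀ k k' i i', (T k).vert i = (T k').vert i' → k = k')

/-- An Euler tour: a single closed strict trail traversing every edge (exactly once). -/
def HasEulerTour {V ι : Type} (E : ι → Finset V) : Prop :=
  ∃ T : CST E, Function.Surjective T.edge

/-- The degree of a vertex: the number of edges containing it. -/
def hdeg {V ι : Type} [Fintype ι] [DecidableEq V] (E : ι → Finset V) (v : V) : ℕ :=
  (Finset.univ.filter fun e => v ∈ E e).card

/-- The skeleton graph of the hypergraph: two distinct vertices are adjacent
iff they lie in a common edge.  Walk-connectivity in the hypergraph coincides with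
connectivity in the skeleton. -/
def skeleton {V ι : Type} (E : ι → Finset V) : SimpleGraph V where
  Adj u w := u ≠ w ∧ ∃ e, u ∈ E e ∧ w ∈ E e
  symm := ⟨fun u w h => ⟨h.1.symm, h.2.imp fun _ he => ⟨he.2, he.1⟩⟩⟩
  loopless := ⟨fun _ h => h.1 rfl⟩

/-- The number of connected components of the hypergraph. -/
noncomputable def ccCount {V ι : Type} (E : ι → Finset V) : ℕ :=
  Nat.card (skeleton E).ConnectedComponent

theorem nxt_eq_add_one {n : ℕ} [NeZero n] (i : Fin n) : nxt i = i + 1 := by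
  ext
  simp [nxt, Fin.val_add]

theorem Fin.sub_one_ne_add_one {n : ℕ} [NeZero n] (hn : 3 ≤ n) (i : Fin n) : i - 1 ≠ i + 1 := by
  rw [ne_eq, sub_eq_iff_eq_add, add_assoc, left_eq_add, Fin.ext_iff, Fin.val_add, Fin.val_one',
    Nat.one_mod_eq_one.mpr (by omega), Fin.val_zero, Nat.mod_eq_of_lt (by omega)]
  omega

theorem card_le_hdeg {V ι : Type} [Fintype ι] [DecidableEq V] (E : ι → Finset V) {v : V}
    {s : Finset ι} (hs : ∀ f ∈ s, v ∈ E f) : s.card ≤ hdeg E v :=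
  Finset.card_le_card fun f hf => Finset.mem_filter.mpr ⟨Finset.mem_univ f, hs f hf⟩

theorem three_le_hdeg {V ι : Type} [Fintype ι] [DecidableEq V] (E : ι → Finset V) {v : V}
    {a b c : ι} (hab : a ≠ b) (hac : a ≠ c) (hbc : b ≠ c)
    (ha : v ∈ E a) (hb : v ∈ E b) (hc : v ∈ E c) : 3 ≤ hdeg E v := by
  classical
  rw [← Finset.card_eq_three.mpr ⟨a, b, c, hab, hac, hbc, rfl⟩]
  refine card_le_hdeg E fun f hf => ?_
  simp only [Finset.mem_insert, Finset.mem_singleton] at hf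
  rcases hf with rfl | rfl | rfl <;> assumption

theorem stmt12_general {V ι : Type} [Fintype ι] [DecidableEq V]
    (E : ι → Finset V) (k : ℕ) (hk : 3 ≤ k)
    (e : Fin k → ι) (einj : Function.Injective e)
    (hcyc : ∀ i, (E (e i) ∩ E (e (nxt i))).Nonempty)
    (hdeg2 : ∀ v, hdeg E v ≤ 2) :
    ∃ v : Fin k → V, ∀ i, v i ∈ E (e i) ∧ v (nxt i) ∈ E (e i) ∧ v i ≠ v (nxt i) := by
  have : NeZero k := ⟨by omega⟩
  choose w hw using hcyc
  simp only [nxt_eq_add_one, Finset.mem_inter] at hw ⊢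
  refine ⟨fun i => w (i - 1), fun i =>
    ⟨by simpa using (hw (i - 1)).2, by simpa using (hw i).1, ?_⟩⟩
  intro hw_eq
  simp only [add_sub_cancel_right] at hw_eq
  have hprev : i - 1 ≠ i := by simp only [ne_eq, sub_eq_self, Fin.one_eq_zero_iff]; omega
  have hnext : i ≠ i + 1 := by simp only [ne_eq, left_eq_add, Fin.one_eq_zero_iff]; omega
  have h3 := three_le_hdeg E (einj.ne hprev) (einj.ne (Fin.sub_one_ne_add_one hk i))
    (einj.ne hnext) (hw_eq ▸ (hw (i - 1)).1) (hw i).1 (hw i).2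
  linarith [hdeg2 (w i)]

/-- Let `e₀ e₁ … e_{k-1} e₀` be a cycle in the intersection graph of a
hypergraph all of whose vertices have degree at most 2 (so the `eᵢ` are pairwise
distinct edges and cyclically consecutive edges intersect).  Then one can choose
vertices `v₀,…,v_{k-1}` with `vᵢ, v_{i+1} ∈ eᵢ` and `vᵢ ≠ v_{i+1}` (indices mod `k`),
i.e. `v₀ e₀ v₁ e₁ … v_{k-1} e_{k-1} v₀` is a closed strict trail. -/
theorem stmt12 {V ι : Type} [Fintype ι] [DecidableEq V] [Nonempty V]
    (E : ι → Finset V) (k : ℕ) (hk : 3 ≤ k)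
    (e : Fin k → ι) (einj : Function.Injective e)
    (hcyc : ∀ i, (E (e i) ∩ E (e (nxt i))).Nonempty)
    (hdeg2 : ∀ v, hdeg E v ≤ 2) :
    ∃ v : Fin k → V, ∀ i, v i ∈ E (e i) ∧ v (nxt i) ∈ E (e i) ∧ v i ≠ v (nxt i) :=
  stmt12_general E k hk e einj hcyc hdeg2
end

section
/- A connected hypergraph H = (V,E) admits an Euler family if and only if its incidence graph G has a subgraph G' in which every vertex of V has even degree and every vertex of E has degree exactly 2. -/
open Finset

/-!
Given an Euler family, the incidences `(vᵢ, eᵢ)` and `(vᵢ₊₁, eᵢ)` of its trails form the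
subgraph: every edge is traversed exactly once, between two distinct anchors, and every visit of
a trail to a vertex contributes two incidences.

Conversely, a subgraph `S` in which every edge has degree 2 is a loopless multigraph on `V` with
even degrees. Growing a path in it until it first runs into itself produces a closed strict
trail; removing its incidences keeps all degrees even, so by induction the rest of `S` splits
into anchor-disjoint closed strict trails, and the removed trail is spliced into each of those
it shares an anchor with.
-/

lemma Nat.eq_of_add_mod_eq_add_mod {n c a b : ℕ} (ha : a < n) (hb : b < n)
    (h : (c + a) % n = (c + b) % n) : a = b :=
  (Nat.ModEq.add_left_cancel' c h).eq_of_lt_of_lt ha hb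

lemma val_nxt {n : ℕ} (i : Fin n) : (nxt i : ℕ) = (i + 1) % n := rfl

lemma nxt_injective (n : ℕ) : Function.Injective (nxt (n := n)) := fun i j h =>
  Fin.ext <| Nat.eq_of_add_mod_eq_add_mod (c := 1) i.isLt j.isLt <| by
    simpa only [val_nxt, Nat.add_comm 1] using congrArg Fin.val h

lemma nxt_bijective (n : ℕ) : Function.Bijective (nxt (n := n)) :=
  Finite.injective_iff_bijective.mp (nxt_injective n)

lemma apply_nxt_of_closed {α : Type*} {n : ℕ} {v : ℕ → α} (hv : v n = v 0) (i : Fin n) :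
    v (nxt i) = v (i + 1) := by
  rw [val_nxt]
  rcases Nat.lt_or_ge (i + 1) n with h | h
  · rw [Nat.mod_eq_of_lt h]
  · rw [show (i : ℕ) + 1 = n by omega, Nat.mod_self, hv]

lemma Set.InjOn.update_succ {α : Type*} {f : ℕ → α} {t : ℕ} {y : α}
    (hf : Set.InjOn f (Set.Iic t)) (hy : ∀ j ≤ t, f j ≠ y) :
    Set.InjOn (Function.update f (t + 1) y) (Set.Iic (t + 1)) := by
  intro k hk l hl hkl
  simp only [Set.mem_Iic] at hk hl
  rcases Nat.lt_or_ge k (t + 1) with hkt | hkt <;> rcases Nat.lt_or_ge l (t + 1) with hlt | hlt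
  · simp only [Function.update_of_ne hkt.ne, Function.update_of_ne hlt.ne] at hkl
    exact hf (Set.mem_Iic.mpr (by omega)) (Set.mem_Iic.mpr (by omega)) hkl
  · simp only [Function.update_of_ne hkt.ne, show l = t + 1 by omega, Function.update_self] at hkl
    exact absurd hkl (hy k (by omega))
  · simp only [Function.update_of_ne hlt.ne, show k = t + 1 by omega, Function.update_self] at hkl
    exact absurd hkl.symm (hy l (by omega))
  · omega

variable {V ι : Type}

/-- `v 0, e 0, v 1, …, e (t - 1), v t` is a strict trail for the incidence relation `R`;
the values of `v` beyond `t` and of `e` from `t` on play no role. -/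
def IsTrailSeq (R : V → ι → Prop) (t : ℕ) (v : ℕ → V) (e : ℕ → ι) : Prop :=
  (∀ k < t, R (v k) (e k) ∧ R (v (k + 1)) (e k) ∧ v k ≠ v (k + 1)) ∧ Set.InjOn e (Set.Iio t)

namespace IsTrailSeq

variable {R R' : V → ι → Prop} {t : ℕ} {v : ℕ → V} {e : ℕ → ι}

lemma mono (h : IsTrailSeq R t v e) (hR : ∀ x f, R x f → R' x f) : IsTrailSeq R' t v e :=
  ⟨fun k hk => (h.1 k hk).imp (hR _ _) (And.imp_left (hR _ _)), h.2⟩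

lemma drop (h : IsTrailSeq R t v e) (j : ℕ) :
    IsTrailSeq R (t - j) (fun k => v (j + k)) (fun k => e (j + k)) :=
  ⟨fun k hk => h.1 (j + k) (by omega),
    fun k hk l hl hkl => by
      have := h.2 (Set.mem_Iio.mpr (by simp only [Set.mem_Iio] at hk; omega))
        (Set.mem_Iio.mpr (by simp only [Set.mem_Iio] at hl; omega)) hkl
      omega⟩

lemma append {n₁ n₂ : ℕ} {v₁ v₂ : ℕ → V} {e₁ e₂ : ℕ → ι} (h₁ : IsTrailSeq R n₁ v₁ e₁)
    (h₂ : IsTrailSeq R n₂ v₂ e₂) (hv : v₁ n₁ = v₂ 0) (he : ∀ k < n₁, ∀ l < n₂, e₁ k ≠ e₂ l) :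
    IsTrailSeq R (n₁ + n₂) (fun k => if k < n₁ then v₁ k else v₂ (k - n₁))
      (fun k => if k < n₁ then e₁ k else e₂ (k - n₁)) := by
  refine ⟨fun k hk => ?_, fun k hk l hl hkl => ?_⟩
  · by_cases hk₁ : k < n₁
    · have hsucc : (if k + 1 < n₁ then v₁ (k + 1) else v₂ (k + 1 - n₁)) = v₁ (k + 1) := by
        split_ifs with h
        · rfl
        · rw [show k + 1 - n₁ = 0 by omega, ← hv, show n₁ = k + 1 by omega]
      simp only [if_pos hk₁, hsucc]
      exact h₁.1 k hk₁
    · simp only [if_neg hk₁, if_neg (show ¬ k + 1 < n₁ by omega),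
        show k + 1 - n₁ = k - n₁ + 1 by omega]
      exact h₂.1 _ (by omega)
  · simp only [Set.mem_Iio] at hk hl
    simp only at hkl
    split_ifs at hkl with hk₁ hl₁ hl₁
    · exact h₁.2 hk₁ hl₁ hkl
    · exact absurd hkl (he k hk₁ _ (by omega))
    · exact absurd hkl.symm (he l hl₁ _ (by omega))
    · have := h₂.2 (Set.mem_Iio.mpr (by omega)) (Set.mem_Iio.mpr (by omega)) hkl
      omega

lemma snoc (h : IsTrailSeq R t v e) {y : V} {f : ι} (hx : R (v t) f) (hy : R y f) (hne : v t ≠ y)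
    (hf : ∀ k < t, e k ≠ f) :
    IsTrailSeq R (t + 1) (Function.update v (t + 1) y) (Function.update e t f) := by
  refine ⟨fun k hk => ?_, fun k hk l hl hkl => ?_⟩
  · rcases Nat.lt_or_ge k t with hkt | hkt
    · simp only [Function.update_of_ne (show k ≠ t + 1 by omega),
        Function.update_of_ne (show k + 1 ≠ t + 1 by omega), Function.update_of_ne hkt.ne]
      exact h.1 k hkt
    · obtain rfl : k = t := by omega
      simp only [Function.update_self, Function.update_of_ne (show k ≠ k + 1 by omega)]
      exact ⟨hx, hy, hne⟩
  · simp only [Set.mem_Iio] at hk hl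
    rcases Nat.lt_or_ge k t with hkt | hkt <;> rcases Nat.lt_or_ge l t with hlt | hlt
    · simp only [Function.update_of_ne hkt.ne, Function.update_of_ne hlt.ne] at hkl
      exact h.2 hkt hlt hkl
    · simp only [Function.update_of_ne hkt.ne, show l = t by omega, Function.update_self] at hkl
      exact absurd hkl (hf k hkt)
    · simp only [Function.update_of_ne hlt.ne, show k = t by omega, Function.update_self] at hkl
      exact absurd hkl.symm (hf l hlt)
    · omega

lemma card_le {S : Finset (V × ι)}
    (h : IsTrailSeq (fun x f => (x, f) ∈ S) t v e) : t ≤ #S := by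
  simpa using card_le_card_of_injOn (s := range t) (fun k => (v k, e k))
    (fun k hk => (h.1 k (mem_range.mp hk)).1)
    (fun k hk l hl hkl => h.2 (mem_range.mp hk) (mem_range.mp hl) (congrArg Prod.snd hkl))

lemma image_append {n₁ n₂ : ℕ} {e₁ e₂ : ℕ → ι} :
    (fun k => if k < n₁ then e₁ k else e₂ (k - n₁)) '' Set.Iio (n₁ + n₂) =
      e₁ '' Set.Iio n₁ ∪ e₂ '' Set.Iio n₂ := by
  ext f
  simp only [Set.mem_image, Set.mem_Iio, Set.mem_union]
  constructor
  · rintro ⟨k, hk, rfl⟩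
    split_ifs with h
    · exact Or.inl ⟨k, h, rfl⟩
    · exact Or.inr ⟨k - n₁, by omega, rfl⟩
  · rintro (⟨k, hk, rfl⟩ | ⟨k, hk, rfl⟩)
    · exact ⟨k, by omega, if_pos hk⟩
    · exact ⟨n₁ + k, by omega, by simp⟩

end IsTrailSeq

namespace CST

variable {E : ι → Finset V}

lemma pos (C : CST E) : 0 < C.n := by
  have := C.hn
  omega

def ofTrailSeq {n : ℕ} (hn : 2 ≤ n) {v : ℕ → V} {e : ℕ → ι}
    (h : IsTrailSeq (fun x f => x ∈ E f) n v e) (hv : v n = v 0) : CST E where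
  n := n
  hn := hn
  vert i := v i
  edge i := e i
  mem_left i := (h.1 i i.isLt).1
  mem_right i := by
    rw [apply_nxt_of_closed hv]
    exact (h.1 i i.isLt).2.1
  ne_next i := by
    rw [apply_nxt_of_closed hv]
    exact (h.1 i i.isLt).2.2
  edge_inj i j hij := Fin.ext (h.2 i.isLt j.isLt hij)

lemma range_edge_ofTrailSeq {n : ℕ} (hn : 2 ≤ n) {v : ℕ → V} {e : ℕ → ι}
    (h : IsTrailSeq (fun x f => x ∈ E f) n v e) (hv : v n = v 0) :
    Set.range (ofTrailSeq hn h hv).edge = e '' Set.Iio n := by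
  ext f
  simp only [Set.mem_range, Set.mem_image, Set.mem_Iio]
  exact ⟨fun ⟨i, hi⟩ => ⟨i, i.isLt, hi⟩, fun ⟨k, hk, hf⟩ => ⟨⟨k, hk⟩, hf⟩⟩

def vertMod (C : CST E) (k : ℕ) : V := C.vert ⟨k % C.n, Nat.mod_lt _ C.pos⟩

def edgeMod (C : CST E) (k : ℕ) : ι := C.edge ⟨k % C.n, Nat.mod_lt _ C.pos⟩

lemma vertMod_val (C : CST E) (i : Fin C.n) : C.vertMod i = C.vert i := by
  simp only [vertMod, Nat.mod_eq_of_lt i.isLt]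

lemma vertMod_add_n (C : CST E) (k : ℕ) : C.vertMod (k + C.n) = C.vertMod k := by
  simp only [vertMod, Nat.add_mod_right]

lemma vertMod_succ (C : CST E) (k : ℕ) :
    C.vertMod (k + 1) = C.vert (nxt ⟨k % C.n, Nat.mod_lt _ C.pos⟩) := by
  simp only [vertMod]
  congr 1
  exact Fin.ext (by simp only [val_nxt, Nat.mod_add_mod])

lemma isTrailSeq_rotate (C : CST E) (i : ℕ) :
    IsTrailSeq (fun x f => x ∈ E f) C.n (fun k => C.vertMod (i + k))
      (fun k => C.edgeMod (i + k)) := by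
  refine ⟨fun k _ => ⟨C.mem_left _, ?_, ?_⟩, fun k hk l hl hkl => ?_⟩
  · show C.vertMod (i + k + 1) ∈ _
    rw [vertMod_succ]
    exact C.mem_right _
  · show _ ≠ C.vertMod (i + k + 1)
    rw [vertMod_succ]
    exact C.ne_next _
  · exact Nat.eq_of_add_mod_eq_add_mod hk hl (congrArg Fin.val (C.edge_inj hkl))

lemma image_edgeMod_rotate (C : CST E) (i : ℕ) :
    (fun k => C.edgeMod (i + k)) '' Set.Iio C.n = Set.range C.edge := by
  have hsurj : Function.Surjective
      fun k : Fin C.n => (⟨(i + k) % C.n, Nat.mod_lt _ C.pos⟩ : Fin C.n) :=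
    Finite.injective_iff_surjective.mp fun k l hkl =>
      Fin.ext (Nat.eq_of_add_mod_eq_add_mod k.isLt l.isLt (congrArg Fin.val hkl))
  ext f
  simp only [Set.mem_image, Set.mem_Iio, Set.mem_range]
  constructor
  · rintro ⟨k, -, rfl⟩
    exact ⟨_, rfl⟩
  · rintro ⟨j, rfl⟩
    obtain ⟨k, hk⟩ := hsurj j
    exact ⟨k, k.isLt, congrArg C.edge hk⟩

def splice (C₁ C₂ : CST E) (i₁ : Fin C₁.n) (i₂ : Fin C₂.n) (hv : C₁.vert i₁ = C₂.vert i₂)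
    (he : ∀ j₁ j₂, C₁.edge j₁ ≠ C₂.edge j₂) : CST E :=
  ofTrailSeq (n := C₁.n + C₂.n) (by have := C₁.hn; omega)
    ((C₁.isTrailSeq_rotate i₁).append (C₂.isTrailSeq_rotate i₂)
      (by simp only [vertMod_add_n, Nat.add_zero, vertMod_val, hv])
      (fun _ _ _ _ => he _ _))
    (by simp [vertMod_add_n, vertMod_val, hv])

lemma range_edge_splice (C₁ C₂ : CST E) (i₁ : Fin C₁.n) (i₂ : Fin C₂.n)
    (hv : C₁.vert i₁ = C₂.vert i₂) (he : ∀ j₁ j₂, C₁.edge j₁ ≠ C₂.edge j₂) :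
    Set.range (splice C₁ C₂ i₁ i₂ hv he).edge = Set.range C₁.edge ∪ Set.range C₂.edge := by
  rw [splice, range_edge_ofTrailSeq, IsTrailSeq.image_append (e₁ := fun k => C₁.edgeMod (i₁ + k))
    (e₂ := fun k => C₂.edgeMod (i₂ + k)), image_edgeMod_rotate, image_edgeMod_rotate]

end CST

structure IsEulerFamilyOn {E : ι → Finset V} {m : ℕ} (T : Fin m → CST E) (F : Set ι) : Prop where
  mem_iff : ∀ e, e ∈ F ↔ ∃ k i, (T k).edge i = e
  edge_disjoint : ∀ k k' i i', (T k).edge i = (T k').edge i' → k = k'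
  anchor_disjoint : ∀ k k' i i', (T k).vert i = (T k').vert i' → k = k'

namespace IsEulerFamilyOn

variable {E : ι → Finset V} {m : ℕ} {F : Set ι}

lemma hasEulerFamily {T : Fin m → CST E} (hT : IsEulerFamilyOn T F) (hF : ∀ e, e ∈ F) :
    HasEulerFamily E :=
  ⟨m, T, fun e => (hT.mem_iff e).mp (hF e), hT.edge_disjoint, hT.anchor_disjoint⟩

lemma range_edge_subset {T : Fin m → CST E} (hT : IsEulerFamilyOn T F) (k : Fin m) :
    Set.range (T k).edge ⊆ F := by
  rintro _ ⟨i, rfl⟩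
  exact (hT.mem_iff _).mpr ⟨k, i, rfl⟩

lemma removeNth {T : Fin (m + 1) → CST E} (hT : IsEulerFamilyOn T F) (k : Fin (m + 1)) :
    IsEulerFamilyOn (Fin.removeNth k T) (F \ Set.range (T k).edge) where
  mem_iff e := by
    simp only [Fin.removeNth_apply, Set.mem_sdiff, hT.mem_iff, Set.mem_range, not_exists]
    constructor
    · rintro ⟨⟨k', i, rfl⟩, hk'⟩
      have hne : k' ≠ k := by
        rintro rfl
        exact hk' i rfl
      obtain ⟨l, rfl⟩ := Fin.exists_succAbove_eq hne
      exact ⟨l, i, rfl⟩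
    · rintro ⟨l, i, rfl⟩
      exact ⟨⟨_, i, rfl⟩, fun j hj => Fin.succAbove_ne k l (hT.edge_disjoint _ _ _ _ hj.symm)⟩
  edge_disjoint l l' i i' h := Fin.succAbove_right_injective (hT.edge_disjoint _ _ i i' h)
  anchor_disjoint l l' i i' h := Fin.succAbove_right_injective (hT.anchor_disjoint _ _ i i' h)

lemma cons {T : Fin m → CST E} (hT : IsEulerFamilyOn T F) (C : CST E) (hC : ∀ j, C.edge j ∉ F)
    (hCv : ∀ k i j, (T k).vert i ≠ C.vert j) :
    IsEulerFamilyOn (Fin.cons C T : Fin (m + 1) → CST E) (F ∪ Set.range C.edge) where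
  mem_iff e := by
    rw [Set.mem_union, hT.mem_iff]
    constructor
    · rintro (⟨k, i, rfl⟩ | ⟨j, rfl⟩)
      · exact ⟨k.succ, i, rfl⟩
      · exact ⟨0, j, rfl⟩
    · rintro ⟨k, i, rfl⟩
      induction k using Fin.cases
      · exact Or.inr ⟨i, rfl⟩
      · exact Or.inl ⟨_, i, rfl⟩
  edge_disjoint k k' i i' h := by
    induction k using Fin.cases <;> induction k' using Fin.cases
    · rfl
    · exact absurd ((hT.mem_iff _).mpr ⟨_, _, h.symm⟩) (hC i)
    · exact absurd ((hT.mem_iff _).mpr ⟨_, _, h⟩) (hC i')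
    · exact congrArg Fin.succ (hT.edge_disjoint _ _ _ _ h)
  anchor_disjoint k k' i i' h := by
    induction k using Fin.cases <;> induction k' using Fin.cases
    · rfl
    · exact absurd h.symm (hCv _ _ _)
    · exact absurd h (hCv _ _ _)
    · exact congrArg Fin.succ (hT.anchor_disjoint _ _ _ _ h)

theorem exists_union {T : Fin m → CST E} (hT : IsEulerFamilyOn T F) (C : CST E)
    (hC : ∀ j, C.edge j ∉ F) :
    ∃ (m' : ℕ) (T' : Fin m' → CST E), IsEulerFamilyOn T' (F ∪ Set.range C.edge) := by
  induction m generalizing F C with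
  | zero => exact ⟨1, _, hT.cons C hC fun k => k.elim0⟩
  | succ m ih =>
    by_cases hmeet : ∃ k i j, (T k).vert i = C.vert j
    · obtain ⟨k, i, j, hv⟩ := hmeet
      have hd : ∀ j₁ j₂, (T k).edge j₁ ≠ C.edge j₂ := fun j₁ j₂ h =>
        hC j₂ (h ▸ hT.range_edge_subset k ⟨j₁, rfl⟩)
      obtain ⟨m', T', hT'⟩ := ih (hT.removeNth k) (CST.splice (T k) C i j hv hd) fun j' hj' => by
        have hj'' : (CST.splice (T k) C i j hv hd).edge j' ∈
            Set.range (T k).edge ∪ Set.range C.edge := by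
          rw [← CST.range_edge_splice (T k) C i j hv hd]
          exact ⟨j', rfl⟩
        rcases hj'' with h | ⟨j'', h⟩
        · exact hj'.2 h
        · exact hC j'' (h ▸ hj'.1)
      refine ⟨m', T', ?_⟩
      rwa [CST.range_edge_splice, ← Set.union_assoc, Set.sdiff_union_self,
        Set.union_eq_self_of_subset_right (hT.range_edge_subset k)] at hT'
    · push Not at hmeet
      exact ⟨_, _, hT.cons C hC hmeet⟩

end IsEulerFamilyOn

lemma CST.card_filter_vert_nxt [DecidableEq V] {E : ι → Finset V} (C : CST E) (v : V) :
    #{i | C.vert (nxt i) = v} = #{i | C.vert i = v} := by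
  simp only [card_filter]
  exact (Equiv.ofBijective _ (nxt_bijective C.n)).sum_comp fun i => if C.vert i = v then 1 else 0

section Flags

variable [DecidableEq V] [DecidableEq ι] {E : ι → Finset V}

namespace CST

/-- The edges `vᵢ eᵢ` and `vᵢ₊₁ eᵢ` of the incidence graph traversed by `C`. -/
def flags (C : CST E) : Finset (V × ι) :=
  univ.image (fun i => (C.vert i, C.edge i)) ∪ univ.image (fun i => (C.vert (nxt i), C.edge i))

lemma mem_flags {C : CST E} {p : V × ι} :
    p ∈ C.flags ↔ ∃ i, p = (C.vert i, C.edge i) ∨ p = (C.vert (nxt i), C.edge i) := by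
  simp only [flags, mem_union, mem_image, mem_univ, true_and]
  grind

lemma fst_mem_of_mem_flags {C : CST E} {p : V × ι} (hp : p ∈ C.flags) : p.1 ∈ E p.2 := by
  obtain ⟨i, rfl | rfl⟩ := mem_flags.mp hp
  · exact C.mem_left i
  · exact C.mem_right i

lemma snd_mem_range_of_mem_flags {C : CST E} {p : V × ι} (hp : p ∈ C.flags) :
    p.2 ∈ Set.range C.edge := by
  obtain ⟨i, rfl | rfl⟩ := mem_flags.mp hp <;> exact ⟨i, rfl⟩

lemma card_flags_filter_fst (C : CST E) (v : V) :
    #{p ∈ C.flags | p.1 = v} = 2 * #{i | C.vert i = v} := by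
  have hinj₁ : Function.Injective fun i => (C.vert i, C.edge i) :=
    fun i j h => C.edge_inj (congrArg Prod.snd h)
  have hinj₂ : Function.Injective fun i => (C.vert (nxt i), C.edge i) :=
    fun i j h => C.edge_inj (congrArg Prod.snd h)
  have hdisj : Disjoint (univ.image fun i => (C.vert i, C.edge i))
      (univ.image fun i => (C.vert (nxt i), C.edge i)) := by
    simp only [disjoint_left, mem_image, mem_univ, true_and, not_exists]
    rintro _ ⟨i, rfl⟩ j hj
    obtain rfl := C.edge_inj (congrArg Prod.snd hj)
    exact C.ne_next _ (congrArg Prod.fst hj).symm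
  rw [flags, filter_union, card_union_of_disjoint (disjoint_filter_filter hdisj), filter_image,
    filter_image, card_image_of_injective _ hinj₁, card_image_of_injective _ hinj₂]
  simp only [card_filter_vert_nxt, two_mul]

lemma filter_flags_snd_edge (C : CST E) (i : Fin C.n) :
    {p ∈ C.flags | p.2 = C.edge i} = {(C.vert i, C.edge i), (C.vert (nxt i), C.edge i)} := by
  ext p
  simp only [mem_filter, mem_flags, mem_insert, mem_singleton]
  constructor
  · rintro ⟨⟨j, rfl | rfl⟩, hj⟩ <;> obtain rfl := C.edge_inj hj <;> simp
  · rintro (rfl | rfl) <;> exact ⟨⟨i, by simp⟩, rfl⟩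

lemma card_flags_filter_snd_edge (C : CST E) (i : Fin C.n) :
    #{p ∈ C.flags | p.2 = C.edge i} = 2 := by
  rw [filter_flags_snd_edge, card_pair]
  simpa using C.ne_next i

lemma filter_flags_snd_eq_empty (C : CST E) {e : ι} (he : e ∉ Set.range C.edge) :
    {p ∈ C.flags | p.2 = e} = ∅ :=
  filter_eq_empty_iff.mpr fun _ hp hpe => he (hpe ▸ snd_mem_range_of_mem_flags hp)

end CST

theorem HasEulerFamily.exists_flags (h : HasEulerFamily E) :
    ∃ S : Finset (V × ι), (∀ p ∈ S, p.1 ∈ E p.2) ∧ (∀ v, Even #{p ∈ S | p.1 = v}) ∧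
      ∀ e, #{p ∈ S | p.2 = e} = 2 := by
  obtain ⟨m, T, hcov, hedge, -⟩ := h
  have hdisj (P : V × ι → Prop) [DecidablePred P] :
      (↑(univ : Finset (Fin m)) : Set (Fin m)).PairwiseDisjoint
        fun k => {p ∈ (T k).flags | P p} := by
    intro k _ k' _ hkk'
    refine disjoint_filter_filter (disjoint_left.mpr fun p hp hp' => hkk' ?_)
    obtain ⟨i, hi⟩ := CST.snd_mem_range_of_mem_flags hp
    obtain ⟨i', hi'⟩ := CST.snd_mem_range_of_mem_flags hp'
    exact hedge k k' i i' (hi.trans hi'.symm)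
  refine ⟨univ.biUnion fun k => (T k).flags, ?_, fun v => ?_, fun e => ?_⟩
  · simp only [mem_biUnion, mem_univ, true_and]
    rintro p ⟨k, hp⟩
    exact CST.fst_mem_of_mem_flags hp
  · rw [filter_biUnion, card_biUnion (hdisj _)]
    exact Finset.even_sum _ fun k _ => by simp only [CST.card_flags_filter_fst, even_two_mul]
  · obtain ⟨k, i, rfl⟩ := hcov e
    rw [filter_biUnion, card_biUnion (hdisj _), sum_eq_single k]
    · exact (T k).card_flags_filter_snd_edge i
    · intro k' _ hk'
      rw [CST.filter_flags_snd_eq_empty, card_empty]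
      rintro ⟨i', hi'⟩
      exact hk' (hedge _ _ _ _ hi')
    · simp

end Flags

section Decomposition

variable {E : ι → Finset V} {S : Finset (V × ι)}

lemma eq_or_eq_of_card_filter_snd [DecidableEq V] [DecidableEq ι]
    (h2 : ∀ p ∈ S, #{q ∈ S | q.2 = p.2} = 2) {x y z : V} {e : ι}
    (hx : (x, e) ∈ S) (hy : (y, e) ∈ S) (hz : (z, e) ∈ S) (hxy : x ≠ y) : z = x ∨ z = y := by
  obtain ⟨a, b, -, hab⟩ := card_eq_two.mp (h2 _ hx)
  have hmem : ∀ w, (w, e) ∈ S → (w, e) = a ∨ (w, e) = b := fun w hw => by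
    have hw' : (w, e) ∈ {q ∈ S | q.2 = (x, e).2} := mem_filter.mpr ⟨hw, rfl⟩
    simpa [hab] using hw'
  grind

lemma exists_ne_mem_of_card_filter_snd [DecidableEq ι]
    (h2 : ∀ p ∈ S, #{q ∈ S | q.2 = p.2} = 2) {x : V} {e : ι} (hx : (x, e) ∈ S) :
    ∃ y ≠ x, (y, e) ∈ S := by
  obtain ⟨⟨y, e'⟩, hy, hne⟩ := exists_mem_ne (by rw [h2 _ hx]; norm_num) (x, e)
  simp only [mem_filter] at hy
  obtain ⟨hy, rfl⟩ := hy
  exact ⟨y, fun h => hne (h ▸ rfl), hy⟩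

lemma exists_ne_mem_of_even_card_filter_fst [DecidableEq V]
    (heven : ∀ v, Even #{p ∈ S | p.1 = v}) {x : V} {e : ι} (hx : (x, e) ∈ S) :
    ∃ f ≠ e, (x, f) ∈ S := by
  have hpos : 0 < #{p ∈ S | p.1 = x} := card_pos.mpr ⟨_, mem_filter.mpr ⟨hx, rfl⟩⟩
  obtain ⟨⟨x', f⟩, hf, hne⟩ :=
    exists_mem_ne (s := {p ∈ S | p.1 = x}) (by obtain ⟨k, hk⟩ := heven x; omega) (x, e)
  simp only [mem_filter] at hf
  obtain ⟨hf, rfl⟩ := hf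
  exact ⟨f, fun h => hne (h ▸ rfl), hf⟩

/-- Read as a multigraph on `V` in which each edge joins its two incidences, `S` is loopless
with all degrees even. -/
structure IsEvenMultigraph [DecidableEq V] [DecidableEq ι] (S : Finset (V × ι)) : Prop where
  card_filter_snd : ∀ p ∈ S, #{q ∈ S | q.2 = p.2} = 2
  even_card_filter_fst : ∀ v, Even #{p ∈ S | p.1 = v}

namespace IsEvenMultigraph

variable [DecidableEq V] [DecidableEq ι]

/-- Grow a path along `S` until it runs into itself: evenness supplies a fresh edge at its end,
and since every edge has only two incidences, that edge is not on the path. -/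
theorem exists_closed_trailSeq_of_path (hS : IsEvenMultigraph S) {t : ℕ} {f : ℕ → V}
    {g : ℕ → ι} (hp : IsTrailSeq (fun x e => (x, e) ∈ S) t f g) (hf : Set.InjOn f (Set.Iic t))
    (ht : 0 < t) :
    ∃ n, 2 ≤ n ∧ ∃ (v : ℕ → V) (e : ℕ → ι),
      IsTrailSeq (fun x e => (x, e) ∈ S) n v e ∧ v n = v 0 := by
  have hlast : (f t, g (t - 1)) ∈ S := by
    simpa [Nat.sub_add_cancel ht] using (hp.1 (t - 1) (by omega)).2.1
  obtain ⟨e, hne, hxe⟩ := exists_ne_mem_of_even_card_filter_fst hS.2 hlast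
  obtain ⟨y, hyx, hye⟩ := exists_ne_mem_of_card_filter_snd hS.1 hxe
  have hfresh : ∀ k < t, g k ≠ e := by
    rintro k hk rfl
    obtain ⟨hk₀, hk₁, hkne⟩ := hp.1 k hk
    rcases eq_or_eq_of_card_filter_snd hS.1 hk₀ hk₁ hxe hkne with h | h
    · exact hk.ne' (hf (Set.mem_Iic.mpr le_rfl) (Set.mem_Iic.mpr hk.le) h)
    · have hkt : k + 1 = t := hf (Set.mem_Iic.mpr (by omega)) (Set.mem_Iic.mpr le_rfl) h.symm
      exact hne (by rw [← hkt, Nat.add_sub_cancel])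
  have hext := hp.snoc hxe hye hyx.symm hfresh
  by_cases hrevisit : ∃ j ≤ t, f j = y
  · obtain ⟨j, hj, rfl⟩ := hrevisit
    have hjt : j < t := lt_of_le_of_ne hj fun h => hyx (h ▸ rfl)
    refine ⟨t + 1 - j, by omega, _, _, hext.drop j, ?_⟩
    simp [show j + (t + 1 - j) = t + 1 by omega, Function.update_of_ne (show j ≠ t + 1 by omega)]
  · push Not at hrevisit
    have := hext.card_le
    exact hS.exists_closed_trailSeq_of_path hext (hf.update_succ hrevisit) (by omega)
termination_by #S - t

theorem exists_cst_flags_subset (hS : IsEvenMultigraph S) (hE : ∀ p ∈ S, p.1 ∈ E p.2)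
    (hne : S.Nonempty) : ∃ C : CST E, C.flags ⊆ S := by
  obtain ⟨⟨x, e⟩, hxe⟩ := hne
  obtain ⟨y, hyx, hye⟩ := exists_ne_mem_of_card_filter_snd hS.1 hxe
  have hp : IsTrailSeq (fun x e => (x, e) ∈ S) 1 (fun k => if k = 0 then x else y) fun _ => e := by
    refine ⟨fun k hk => ?_, fun k hk l hl _ => ?_⟩
    · obtain rfl : k = 0 := by omega
      exact ⟨hxe, hye, hyx.symm⟩
    · simp only [Set.mem_Iio] at hk hl
      omega
  have hf : Set.InjOn (fun k => if k = 0 then x else y) (Set.Iic 1) := by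
    intro k hk l hl hkl
    simp only [Set.mem_Iic] at hk hl
    interval_cases k <;> interval_cases l <;> simp_all [eq_comm]
  obtain ⟨n, hn, v, e, hc, hv⟩ := hS.exists_closed_trailSeq_of_path hp hf one_pos
  refine ⟨CST.ofTrailSeq hn (hc.mono fun x f h => hE _ h) hv, fun p hp => ?_⟩
  obtain ⟨i, rfl | rfl⟩ := CST.mem_flags.mp hp
  · exact (hc.1 i i.isLt).1
  · convert (hc.1 i i.isLt).2.1 using 3
    exacts [apply_nxt_of_closed hv i, rfl]

lemma snd_notMem_range_of_mem_sdiff_flags (hS : IsEvenMultigraph S) {C : CST E}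
    (hC : C.flags ⊆ S) {p : V × ι} (hp : p ∈ S \ C.flags) : p.2 ∉ Set.range C.edge := by
  rintro ⟨i, hi⟩
  obtain ⟨hpS, hpC⟩ := mem_sdiff.mp hp
  have heq : {q ∈ C.flags | q.2 = p.2} = {q ∈ S | q.2 = p.2} :=
    eq_of_subset_of_card_le (filter_subset_filter _ hC)
      (by rw [hS.1 p hpS, ← hi, C.card_flags_filter_snd_edge])
  have hpS' : p ∈ {q ∈ S | q.2 = p.2} := mem_filter.mpr ⟨hpS, rfl⟩
  exact hpC (mem_filter.mp (heq ▸ hpS')).1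

lemma sdiff_flags (hS : IsEvenMultigraph S) {C : CST E} (hC : C.flags ⊆ S) :
    IsEvenMultigraph (S \ C.flags) where
  card_filter_snd p hp := by
    rw [← hS.1 p (mem_sdiff.mp hp).1]
    congr 1
    ext q
    simp only [mem_filter, mem_sdiff]
    refine ⟨fun ⟨⟨hq, _⟩, hqp⟩ => ⟨hq, hqp⟩, fun ⟨hq, hqp⟩ => ⟨⟨hq, fun hqC => ?_⟩, hqp⟩⟩
    exact hS.snd_notMem_range_of_mem_sdiff_flags hC hp
      (hqp ▸ CST.snd_mem_range_of_mem_flags hqC)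
  even_card_filter_fst v := by
    have hsplit : #{p ∈ S | p.1 = v} =
        #{p ∈ S \ C.flags | p.1 = v} + #{p ∈ C.flags | p.1 = v} := by
      rw [← card_union_of_disjoint (disjoint_filter_filter sdiff_disjoint), ← filter_union,
        sdiff_union_of_subset hC]
    have h := hS.2 v
    rw [hsplit, C.card_flags_filter_fst] at h
    exact (Nat.even_add.mp h).mpr (even_two_mul _)

theorem exists_isEulerFamilyOn (hS : IsEvenMultigraph S) (hE : ∀ p ∈ S, p.1 ∈ E p.2) :
    ∃ (m : ℕ) (T : Fin m → CST E), IsEulerFamilyOn T {e | ∃ x, (x, e) ∈ S} := by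
  induction S using Finset.strongInduction with
  | H S ih =>
  obtain rfl | hne := S.eq_empty_or_nonempty
  · exact ⟨0, Fin.elim0, fun e => by simp, fun k => k.elim0, fun k => k.elim0⟩
  obtain ⟨C, hC⟩ := hS.exists_cst_flags_subset hE hne
  have hCne : C.flags.Nonempty := ⟨_, CST.mem_flags.mpr ⟨⟨0, C.pos⟩, Or.inl rfl⟩⟩
  obtain ⟨m, T, hT⟩ := ih (S \ C.flags) (sdiff_ssubset hC hCne) (hS.sdiff_flags hC)
    fun p hp => hE p (mem_sdiff.mp hp).1
  obtain ⟨m', T', hT'⟩ := hT.exists_union C fun j ⟨x, hx⟩ =>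
    hS.snd_notMem_range_of_mem_sdiff_flags hC hx ⟨j, rfl⟩
  refine ⟨m', T', ?_⟩
  convert hT' using 1
  ext e
  simp only [Set.mem_ofPred_eq, Set.mem_union, mem_sdiff]
  constructor
  · rintro ⟨x, hx⟩
    by_cases hxC : (x, e) ∈ C.flags
    · exact Or.inr (CST.snd_mem_range_of_mem_flags hxC)
    · exact Or.inl ⟨x, hx, hxC⟩
  · rintro (⟨x, hx, -⟩ | ⟨i, rfl⟩)
    · exact ⟨x, hx⟩
    · exact ⟨C.vert i, hC (CST.mem_flags.mpr ⟨i, Or.inl rfl⟩)⟩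

end IsEvenMultigraph

theorem hasEulerFamily_of_flags [DecidableEq V] [DecidableEq ι] (S : Finset (V × ι))
    (hE : ∀ p ∈ S, p.1 ∈ E p.2) (heven : ∀ v, Even #{p ∈ S | p.1 = v})
    (h2 : ∀ e, #{p ∈ S | p.2 = e} = 2) : HasEulerFamily E := by
  obtain ⟨m, T, hT⟩ := IsEvenMultigraph.exists_isEulerFamilyOn ⟨fun p _ => h2 p.2, heven⟩ hE
  refine hT.hasEulerFamily fun e => ?_
  obtain ⟨⟨x, e'⟩, hx⟩ := card_pos.mp (by rw [h2 e]; exact two_pos)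
  simp only [mem_filter] at hx
  obtain ⟨hx, rfl⟩ := hx
  exact ⟨x, hx⟩

end Decomposition

theorem stmt14_general {V ι : Type} [DecidableEq V] [DecidableEq ι] (E : ι → Finset V) :
    HasEulerFamily E ↔
      ∃ S : Finset (V × ι),
        (∀ p ∈ S, p.1 ∈ E p.2) ∧
        (∀ v : V, Even ((S.filter fun p => p.1 = v).card)) ∧
        (∀ e : ι, (S.filter fun p => p.2 = e).card = 2) :=
  ⟨HasEulerFamily.exists_flags, fun ⟨S, hE, heven, h2⟩ => hasEulerFamily_of_flags S hE heven h2⟩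

/-- A connected hypergraph `H = (V,E)` (with nonempty edges) admits an
Euler family if and only if its incidence graph has a subgraph (given by a subset `S`
of the incidence pairs, i.e. flags) in which every vertex of `V` has even degree and
every vertex of `E` has degree exactly 2. -/
theorem stmt14 {V ι : Type} [Fintype V] [Fintype ι] [DecidableEq V] [DecidableEq ι]
    [Nonempty V] (E : ι → Finset V)
    (hne : ∀ e, (E e).Nonempty) (hconn : (skeleton E).Connected) :
    HasEulerFamily E ↔
      ∃ S : Finset (V × ι),
        (∀ p ∈ S, p.1 ∈ E p.2) ∧
        (∀ v : V, Even ((S.filter fun p => p.1 = v).card)) ∧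
        (∀ e : ι, (S.filter fun p => p.2 = e).card = 2) :=
  stmt14_general E
end
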